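/- Bounded positive variation of the component-error count: let S(X) = Σ_{W∈𝒲} min_π 1{π(Ỹ^W(X)) ≠ Y^W} where Ỹ^W(X) depends only on the edges within W. If changing a single edge e can only affect the indicator terms for bags W containing e, then V₊ = Σ_e E[(S − S^{(e)})²·1{S > S^{(e)}}] ≤ (max_e |𝒲(e)|)·(max_W |E(W)|)·S(X). -/
import Mathlib


open MeasureTheory

/-- Bounded positive variation of the component-error count
`S(X) = Σ_{W∈𝒲} f_W(X)`, where each `f_W ∈ {0,1}` depends only on the edges inside bag `W`:
`V₊ = Σ_e E[(S − S^{(e)})²·1{S > S^{(e)}}] ≤ (max_e |𝒲(e)|)·(max_W |E(W)|)·S(X)`. -/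
theorem stmt13 {ι β α : Type*} [DecidableEq ι] [MeasurableSpace α]
    (E : Finset ι) (𝒲 : Finset β) (We : β → Finset ι)
    (f : β → (ι → α) → ℝ)
    (hf01 : ∀ W x, f W x = 0 ∨ f W x = 1)
    (hdep : ∀ W x y, (∀ i ∈ We W, x i = y i) → f W x = f W y)
    (X : ι → α) (ν : Measure α) [IsProbabilityMeasure ν] :
    (∑ e ∈ E, ∫ a,
        (if (∑ W ∈ 𝒲, f W (Function.update X e a)) < ∑ W ∈ 𝒲, f W X then
          ((∑ W ∈ 𝒲, f W X) - ∑ W ∈ 𝒲, f W (Function.update X e a)) ^ 2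
        else 0) ∂ν) ≤
      ((E.sup fun e => (𝒲.filter fun W => e ∈ We W).card : ℕ) : ℝ) *
        ((𝒲.sup fun W => (We W).card : ℕ) : ℝ) * ∑ W ∈ 𝒲, f W X := by
  classical
  have hf0 : ∀ W x, 0 ≤ f W x := by
    intro W x; rcases hf01 W x with h | h <;> simp [h]
  have hf1 : ∀ W x, f W x ≤ 1 := by
    intro W x; rcases hf01 W x with h | h <;> simp [h]
  -- pointwise bound
  have key : ∀ e ∈ E, ∀ a : α,
      (if (∑ W ∈ 𝒲, f W (Function.update X e a)) < ∑ W ∈ 𝒲, f W X then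
          ((∑ W ∈ 𝒲, f W X) - ∑ W ∈ 𝒲, f W (Function.update X e a)) ^ 2
        else 0) ≤
      ((𝒲.filter fun W => e ∈ We W).card : ℝ) *
        ∑ W ∈ 𝒲.filter (fun W => e ∈ We W), f W X := by
    intro e _ a
    set 𝒲e := 𝒲.filter (fun W => e ∈ We W) with h𝒲e
    have hRHS0 : 0 ≤ (𝒲e.card : ℝ) * ∑ W ∈ 𝒲e, f W X := by
      apply mul_nonneg (by positivity)
      exact Finset.sum_nonneg fun W _ => hf0 W X
    split_ifs with h
    · have heq : ∀ W ∈ 𝒲 \ 𝒲e, f W (Function.update X e a) = f W X := by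
        intro W hW
        simp only [h𝒲e, Finset.mem_sdiff, Finset.mem_filter] at hW
        apply hdep
        intro i hi
        have : i ≠ e := by rintro rfl; exact hW.2 ⟨hW.1, hi⟩
        simp [Function.update_of_ne this]
      have hdiff : (∑ W ∈ 𝒲, f W X) - ∑ W ∈ 𝒲, f W (Function.update X e a)
          = ∑ W ∈ 𝒲e, (f W X - f W (Function.update X e a)) := by
        have hsub : 𝒲e ⊆ 𝒲 := Finset.filter_subset _ _
        rw [← Finset.sum_sub_distrib,
          ← Finset.sum_sdiff hsub (f := fun W => f W X - f W (Function.update X e a))]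
        have : ∑ W ∈ 𝒲 \ 𝒲e, (f W X - f W (Function.update X e a)) = 0 :=
          Finset.sum_eq_zero fun W hW => by rw [heq W hW]; ring
        rw [this, zero_add]
      rw [hdiff]
      have hle1 : ∑ W ∈ 𝒲e, (f W X - f W (Function.update X e a)) ≤ (𝒲e.card : ℝ) := by
        calc ∑ W ∈ 𝒲e, (f W X - f W (Function.update X e a))
            ≤ ∑ W ∈ 𝒲e, (1 : ℝ) := Finset.sum_le_sum fun W _ => by
              have := hf1 W X; have := hf0 W (Function.update X e a); linarith
          _ = (𝒲e.card : ℝ) := by simp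
      have hle2 : ∑ W ∈ 𝒲e, (f W X - f W (Function.update X e a)) ≤ ∑ W ∈ 𝒲e, f W X :=
        Finset.sum_le_sum fun W _ => by have := hf0 W (Function.update X e a); linarith
      have hpos : 0 ≤ ∑ W ∈ 𝒲e, (f W X - f W (Function.update X e a)) := by
        rw [← hdiff]; linarith
      calc (∑ W ∈ 𝒲e, (f W X - f W (Function.update X e a))) ^ 2
          = (∑ W ∈ 𝒲e, (f W X - f W (Function.update X e a))) *
            (∑ W ∈ 𝒲e, (f W X - f W (Function.update X e a))) := sq _
        _ ≤ (𝒲e.card : ℝ) * ∑ W ∈ 𝒲e, f W X := mul_le_mul hle1 hle2 hpos (by positivity)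
    · exact hRHS0
  -- integral bound
  have hint : ∀ e ∈ E, (∫ a,
      (if (∑ W ∈ 𝒲, f W (Function.update X e a)) < ∑ W ∈ 𝒲, f W X then
          ((∑ W ∈ 𝒲, f W X) - ∑ W ∈ 𝒲, f W (Function.update X e a)) ^ 2
        else 0) ∂ν) ≤
      ((𝒲.filter fun W => e ∈ We W).card : ℝ) *
        ∑ W ∈ 𝒲.filter (fun W => e ∈ We W), f W X := by
    intro e he
    set C := ((𝒲.filter fun W => e ∈ We W).card : ℝ) *
        ∑ W ∈ 𝒲.filter (fun W => e ∈ We W), f W X with hC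
    have hC0 : 0 ≤ C := by
      apply mul_nonneg (by positivity)
      exact Finset.sum_nonneg fun W _ => hf0 W X
    set g : α → ℝ := fun a =>
      (if (∑ W ∈ 𝒲, f W (Function.update X e a)) < ∑ W ∈ 𝒲, f W X then
          ((∑ W ∈ 𝒲, f W X) - ∑ W ∈ 𝒲, f W (Function.update X e a)) ^ 2
        else 0) with hg
    by_cases hInt : Integrable g ν
    · calc ∫ a, g a ∂ν ≤ ∫ _, C ∂ν :=
            integral_mono hInt (integrable_const C) (fun a => key e he a)
        _ = C := by simp
    · rw [integral_undef hInt]; exact hC0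
  calc (∑ e ∈ E, ∫ a,
        (if (∑ W ∈ 𝒲, f W (Function.update X e a)) < ∑ W ∈ 𝒲, f W X then
          ((∑ W ∈ 𝒲, f W X) - ∑ W ∈ 𝒲, f W (Function.update X e a)) ^ 2
        else 0) ∂ν)
      ≤ ∑ e ∈ E, ((𝒲.filter fun W => e ∈ We W).card : ℝ) *
          ∑ W ∈ 𝒲.filter (fun W => e ∈ We W), f W X :=
        Finset.sum_le_sum hint
    _ ≤ ∑ e ∈ E, ((E.sup fun e => (𝒲.filter fun W => e ∈ We W).card : ℕ) : ℝ) *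
          ∑ W ∈ 𝒲.filter (fun W => e ∈ We W), f W X := by
        apply Finset.sum_le_sum
        intro e he
        apply mul_le_mul_of_nonneg_right
        · exact_mod_cast Finset.le_sup (f := fun e => (𝒲.filter fun W => e ∈ We W).card) he
        · exact Finset.sum_nonneg fun W _ => hf0 W X
    _ = ((E.sup fun e => (𝒲.filter fun W => e ∈ We W).card : ℕ) : ℝ) *
          ∑ e ∈ E, ∑ W ∈ 𝒲.filter (fun W => e ∈ We W), f W X := by
        rw [Finset.mul_sum]
    _ ≤ ((E.sup fun e => (𝒲.filter fun W => e ∈ We W).card : ℕ) : ℝ) *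
          ((𝒲.sup fun W => (We W).card : ℕ) : ℝ) * ∑ W ∈ 𝒲, f W X := by
        rw [mul_assoc]
        apply mul_le_mul_of_nonneg_left _ (by positivity)
        have hswap : ∑ e ∈ E, ∑ W ∈ 𝒲.filter (fun W => e ∈ We W), f W X
            = ∑ W ∈ 𝒲, ((E.filter fun e => e ∈ We W).card : ℝ) * f W X := by
          simp only [Finset.sum_filter]
          rw [Finset.sum_comm]
          refine Finset.sum_congr rfl fun W _ => ?_
          rw [← Finset.sum_filter, Finset.sum_const, nsmul_eq_mul]
        rw [hswap, Finset.mul_sum]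
        apply Finset.sum_le_sum
        intro W hW
        apply mul_le_mul_of_nonneg_right _ (hf0 W X)
        have h1 : (E.filter fun e => e ∈ We W).card ≤ (We W).card := by
          apply Finset.card_le_card
          intro e he
          exact (Finset.mem_filter.mp he).2
        have h2 : (We W).card ≤ 𝒲.sup fun W => (We W).card :=
          Finset.le_sup (f := fun W => (We W).card) hW
        exact_mod_cast h1.trans h2
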